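/- The function $K$ is differentiable on $(0,\infty)$, and for every $\xi > 0$ its derivative satisfies $-a\,K(\xi) \le K'(\xi)\,\xi \le 0$, where $a=\alpha_N/(\alpha_N+1)$. -/

import Mathlib

/-!
Put `F s = s * g s`. Since `g ≥ c₀ > 0` is nondecreasing, `F` is a strictly increasing bijection
of `[0, ∞)` and `s(ξ)` is its inverse; being monotone and onto `(0, ∞)`, `s` is continuous, so the
inverse function rule gives `s' = 1 / (G + D)` with `G = g(s)` and `D = s g'(s)`. The chain rule
then yields `ξ K'(ξ) = -D / (G (G + D))`, and Euler's bound `0 ≤ D ≤ α_N G` for a sum of powers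
with exponents in `[0, α_N]` is exactly `-a K ≤ ξ K' ≤ 0`.
-/

open Set Filter

section RpowSum

variable {ι : Type*} [Fintype ι] {c α : ι → ℝ}

theorem hasDerivAt_sum_mul_rpow (c α : ι → ℝ) {s : ℝ} (hs : 0 < s) :
    HasDerivAt (fun t => ∑ i, c i * t ^ α i) (∑ i, c i * α i * s ^ (α i - 1)) s := by
  simpa only [mul_assoc] using HasDerivAt.fun_sum (u := Finset.univ) fun i _ =>
    (Real.hasDerivAt_rpow_const (p := α i) (Or.inl hs.ne')).const_mul (c i)

theorem monotoneOn_sum_mul_rpow (hc : ∀ i, 0 ≤ c i) (hα : ∀ i, 0 ≤ α i) :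
    MonotoneOn (fun t => ∑ i, c i * t ^ α i) (Ici 0) := fun _ hs _ _ hst =>
  Finset.sum_le_sum fun i _ => mul_le_mul_of_nonneg_left (Real.rpow_le_rpow hs hst (hα i)) (hc i)

theorem le_sum_mul_rpow_of_eq_zero (hc : ∀ i, 0 ≤ c i) {i₀ : ι} (hi₀ : α i₀ = 0) {s : ℝ}
    (hs : 0 ≤ s) : c i₀ ≤ ∑ i, c i * s ^ α i := by
  simpa [hi₀] using Finset.single_le_sum (f := fun i => c i * s ^ α i)
    (fun i _ => mul_nonneg (hc i) (Real.rpow_nonneg hs _)) (Finset.mem_univ i₀)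

theorem mul_sum_mul_rpow_sub_one_mem_Icc (hc : ∀ i, 0 ≤ c i) {A : ℝ} (hα : ∀ i, α i ∈ Icc 0 A)
    {s : ℝ} (hs : 0 < s) :
    s * ∑ i, c i * α i * s ^ (α i - 1) ∈ Icc 0 (A * ∑ i, c i * s ^ α i) := by
  have hEuler : s * ∑ i, c i * α i * s ^ (α i - 1) = ∑ i, c i * α i * s ^ α i := by
    rw [Finset.mul_sum]
    refine Finset.sum_congr rfl fun i _ => ?_
    rw [Real.rpow_sub_one hs.ne']
    field_simp
  rw [hEuler, Finset.mul_sum]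
  refine ⟨Finset.sum_nonneg fun i _ => ?_, Finset.sum_le_sum fun i _ => ?_⟩
  · exact mul_nonneg (mul_nonneg (hc i) (hα i).1) (Real.rpow_nonneg hs.le _)
  · have := mul_le_mul_of_nonneg_left (hα i).2 (mul_nonneg (hc i) (Real.rpow_nonneg hs.le (α i)))
    linarith

end RpowSum

section RightInverse

variable {F s : ℝ → ℝ} {ξ : ℝ}

theorem pos_of_rightInvOn (hF0 : F 0 = 0) (hmaps : MapsTo s (Ici 0) (Ici 0))
    (hinv : RightInvOn s F (Ici 0)) (hξ : 0 < ξ) : 0 < s ξ := by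
  refine (hmaps hξ.le).lt_of_ne' fun h => hξ.ne' ?_
  rw [← hinv hξ.le, h, hF0]

theorem continuousAt_of_rightInvOn (hF : StrictMonoOn F (Ici 0)) (hF0 : F 0 = 0)
    (hmaps : MapsTo s (Ici 0) (Ici 0)) (hinv : RightInvOn s F (Ici 0)) (hξ : 0 < ξ) :
    ContinuousAt s ξ := by
  have hmono : MonotoneOn s (Ioi 0) := fun x hx y hy hxy =>
    (hF.le_iff_le (hmaps (Ioi_subset_Ici_self hx)) (hmaps (Ioi_subset_Ici_self hy))).1 <| by
      rwa [hinv (Ioi_subset_Ici_self hx), hinv (Ioi_subset_Ici_self hy)]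
  have himage : s '' Ioi 0 = Ioi 0 := by
    refine Subset.antisymm (image_subset_iff.2 fun η hη => pos_of_rightInvOn hF0 hmaps hinv hη)
      fun t (ht : 0 < t) => ?_
    have hFt : 0 < F t := hF0 ▸ hF self_mem_Ici ht.le ht
    exact ⟨F t, hFt, hF.injOn (hmaps hFt.le) ht.le (hinv hFt.le)⟩
  refine continuousAt_of_monotoneOn_of_image_mem_nhds hmono (Ioi_mem_nhds hξ) ?_
  rw [himage]
  exact Ioi_mem_nhds (pos_of_rightInvOn hF0 hmaps hinv hξ)

theorem hasDerivAt_of_rightInvOn (hF : StrictMonoOn F (Ici 0)) (hF0 : F 0 = 0)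
    (hmaps : MapsTo s (Ici 0) (Ici 0)) (hinv : RightInvOn s F (Ici 0)) (hξ : 0 < ξ) {F' : ℝ}
    (hFd : HasDerivAt F F' (s ξ)) (hF' : F' ≠ 0) : HasDerivAt s F'⁻¹ ξ :=
  hFd.of_local_left_inverse (continuousAt_of_rightInvOn hF hF0 hmaps hinv hξ) hF'
    (eventually_of_mem (Ioi_mem_nhds hξ) fun _ hη => hinv (Ioi_subset_Ici_self hη))

end RightInverse

section InverseOfMulSelf

variable {g sfun : ℝ → ℝ} {ξ g' : ℝ}

theorem strictMonoOn_mul_self_of_monotoneOn (hmono : MonotoneOn g (Ici 0))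
    (hpos : ∀ s, 0 ≤ s → 0 < g s) : StrictMonoOn (fun s => s * g s) (Ici 0) :=
  fun s hs t ht hst =>
    calc s * g s ≤ s * g t := mul_le_mul_of_nonneg_left (hmono hs ht hst.le) hs
      _ < t * g t := mul_lt_mul_of_pos_right hst (hpos t ht)

theorem hasDerivAt_inv_comp_of_rightInvOn (hmono : MonotoneOn g (Ici 0))
    (hpos : ∀ s, 0 ≤ s → 0 < g s) (hmaps : MapsTo sfun (Ici 0) (Ici 0))
    (hinv : RightInvOn sfun (fun s => s * g s) (Ici 0)) (hξ : 0 < ξ)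
    (hgd : HasDerivAt g g' (sfun ξ)) (hg' : 0 ≤ g') :
    HasDerivAt (fun η => (g (sfun η))⁻¹)
      (-(sfun ξ * g' / (g (sfun ξ) * (g (sfun ξ) + sfun ξ * g'))) / ξ) ξ := by
  have hs₀ : 0 < sfun ξ := pos_of_rightInvOn (zero_mul (g 0)) hmaps hinv hξ
  have hG : 0 < g (sfun ξ) := hpos _ hs₀.le
  have hFd : HasDerivAt (fun s => s * g s) (g (sfun ξ) + sfun ξ * g') (sfun ξ) := by
    simpa using (hasDerivAt_id' (sfun ξ)).fun_mul hgd
  have hsd := hasDerivAt_of_rightInvOn (strictMonoOn_mul_self_of_monotoneOn hmono hpos)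
    (zero_mul (g 0)) hmaps hinv hξ hFd (by positivity)
  refine ((hgd.comp ξ hsd).inv hG.ne').congr_deriv ?_
  have hξ_eq : ξ = sfun ξ * g (sfun ξ) := (hinv hξ.le).symm
  rw [Function.comp_apply]
  generalize sfun ξ = s₀ at hs₀ hG hξ_eq ⊢
  subst hξ_eq
  field_simp

end InverseOfMulSelf

theorem neg_div_mul_add_mem_Icc {A G D : ℝ} (hG : 0 < G) (hD : D ∈ Icc 0 (A * G)) :
    -(D / (G * (G + D))) ∈ Icc (-(A / (A + 1) * (1 / G))) 0 := by
  have hA : 0 ≤ A := nonneg_of_mul_nonneg_left (hD.1.trans hD.2) hG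
  refine ⟨?_, neg_nonpos.2 (by have := hD.1; positivity)⟩
  rw [neg_le_neg_iff, div_mul_div_comm, mul_one, div_le_div_iff₀ (by nlinarith [hD.1])
    (by positivity)]
  nlinarith [hD.1, hD.2]

theorem stmt6_general
    (N : ℕ)
    (α : Fin (N + 1) → ℝ) (hα0 : α 0 = 0) (hαmono : StrictMono α)
    (c : Fin (N + 1) → ℝ) (hc : ∀ i, 0 ≤ c i) (hc0 : 0 < c 0)
    (g : ℝ → ℝ) (hg : ∀ s : ℝ, 0 ≤ s → g s = ∑ i, c i * s ^ (α i))
    (sfun : ℝ → ℝ)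
    (hsfun : ∀ ξ : ℝ, 0 ≤ ξ → 0 ≤ sfun ξ ∧ sfun ξ * g (sfun ξ) = ξ)
    (K : ℝ → ℝ) (hK : ∀ ξ : ℝ, 0 ≤ ξ → K ξ = 1 / g (sfun ξ))
    (a : ℝ) (ha : a = α (Fin.last N) / (α (Fin.last N) + 1)) :
    (∀ ξ : ℝ, 0 < ξ → DifferentiableAt ℝ K ξ) ∧
    (∀ ξ : ℝ, 0 < ξ → -(a * K ξ) ≤ deriv K ξ * ξ ∧ deriv K ξ * ξ ≤ 0) := by
  have hα : ∀ i, α i ∈ Icc 0 (α (Fin.last N)) := fun i =>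
    ⟨hα0 ▸ hαmono.monotone (Fin.zero_le i), hαmono.monotone (Fin.le_last i)⟩
  have hgd : ∀ s, 0 < s → HasDerivAt g (∑ i, c i * α i * s ^ (α i - 1)) s := fun s hs =>
    (hasDerivAt_sum_mul_rpow c α hs).congr_of_eventuallyEq
      (eventually_of_mem (Ioi_mem_nhds hs) fun t ht => hg t (le_of_lt ht))
  have hpos : ∀ s, 0 ≤ s → 0 < g s := fun s hs =>
    hc0.trans_le (hg s hs ▸ le_sum_mul_rpow_of_eq_zero hc hα0 hs)
  have hmono : MonotoneOn g (Ici 0) :=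
    (monotoneOn_sum_mul_rpow hc fun i => (hα i).1).congr fun s hs => (hg s hs).symm
  have hmaps : MapsTo sfun (Ici 0) (Ici 0) := fun ξ hξ => (hsfun ξ hξ).1
  have hinv : RightInvOn sfun (fun s => s * g s) (Ici 0) := fun ξ hξ => (hsfun ξ hξ).2
  have hKd : ∀ ξ, 0 < ξ → ∃ G D, 0 < G ∧ D ∈ Icc 0 (α (Fin.last N) * G) ∧ K ξ = 1 / G ∧
      HasDerivAt K (-(D / (G * (G + D))) / ξ) ξ := by
    intro ξ hξ
    have hs₀ : 0 < sfun ξ := pos_of_rightInvOn (zero_mul (g 0)) hmaps hinv hξ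
    have hD := mul_sum_mul_rpow_sub_one_mem_Icc hc hα hs₀
    rw [← hg _ hs₀.le] at hD
    refine ⟨_, _, hpos _ hs₀.le, hD, hK ξ hξ.le, ?_⟩
    have hg' : 0 ≤ ∑ i, c i * α i * sfun ξ ^ (α i - 1) := nonneg_of_mul_nonneg_right hD.1 hs₀
    refine (hasDerivAt_inv_comp_of_rightInvOn hmono hpos hmaps hinv hξ (hgd _ hs₀)
      hg').congr_of_eventuallyEq ?_
    filter_upwards [Ioi_mem_nhds hξ] with η hη
    rw [hK η (le_of_lt hη), one_div]
  refine ⟨fun ξ hξ => ?_, fun ξ hξ => ?_⟩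
  · obtain ⟨_, _, -, -, -, hd⟩ := hKd ξ hξ
    exact hd.differentiableAt
  · obtain ⟨G, D, hG, hD, hKξ, hd⟩ := hKd ξ hξ
    rw [hd.deriv, div_mul_cancel₀ _ hξ.ne', hKξ, ha]
    exact neg_div_mul_add_mem_Icc hG hD

/-- `K` is differentiable on `(0,∞)` and for every `ξ > 0`,
`-a K(ξ) ≤ K'(ξ) ξ ≤ 0`, where `a = α_N / (α_N + 1)`. -/
theorem stmt6
    (N : ℕ) (hN : 1 ≤ N)
    (α : Fin (N + 1) → ℝ) (hα0 : α 0 = 0) (hαmono : StrictMono α)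
    (c : Fin (N + 1) → ℝ) (hc : ∀ i, 0 ≤ c i) (hc0 : 0 < c 0) (hcN : 0 < c (Fin.last N))
    (g : ℝ → ℝ) (hg : ∀ s : ℝ, 0 ≤ s → g s = ∑ i, c i * s ^ (α i))
    (sfun : ℝ → ℝ)
    (hsfun : ∀ ξ : ℝ, 0 ≤ ξ → 0 ≤ sfun ξ ∧ sfun ξ * g (sfun ξ) = ξ)
    (K : ℝ → ℝ) (hK : ∀ ξ : ℝ, 0 ≤ ξ → K ξ = 1 / g (sfun ξ))
    (a : ℝ) (ha : a = α (Fin.last N) / (α (Fin.last N) + 1)) :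
    (∀ ξ : ℝ, 0 < ξ → DifferentiableAt ℝ K ξ) ∧
    (∀ ξ : ℝ, 0 < ξ → -(a * K ξ) ≤ deriv K ξ * ξ ∧ deriv K ξ * ξ ≤ 0) :=
  stmt6_general N α hα0 hαmono c hc hc0 g hg sfun hsfun K hK a ha
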